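/- arXiv:2202.07318 — 6 statements merged into one kernel-verified Lean document; each statement's English description precedes it below -/
import Mathlib

section
/- Let $v_A, v_B \in (0,\infty)^n$ be probability vectors and $T_A \ge T_B > 0$. Define $f(\gamma) = \gamma T_A \sum_{i=1}^n \min(\gamma^2 v_{B,i}^2/v_{A,i},\, v_{A,i}) - T_B \sum_{i=1}^n \frac{v_{A,i}}{v_{B,i}}\min(\gamma^2 v_{B,i}^2/v_{A,i},\, v_{A,i})$ for $\gamma > 0$. Then $f$ is continuous on $(0,\infty)$, $f(\gamma)\to +\infty$ as $\gamma\to\infty$, $f(\gamma)<0$ for all sufficiently small $\gamma>0$, and consequently there exists $\gamma^*>0$ with $f(\gamma^*)=0$. -/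
open Filter

/-- The equilibrium function `f` for the General Lotto game. -/
noncomputable def lottoF {n : ℕ} (vA vB : Fin n → ℝ) (TA TB : ℝ) (γ : ℝ) : ℝ :=
  γ * TA * ∑ i, min (γ^2 * (vB i)^2 / vA i) (vA i) -
    TB * ∑ i, (vA i / vB i) * min (γ^2 * (vB i)^2 / vA i) (vA i)

theorem stmt_3 (n : ℕ) (hn : 0 < n) (vA vB : Fin n → ℝ) (TA TB : ℝ)
    (hvA : ∀ i, 0 < vA i) (hvB : ∀ i, 0 < vB i)
    (hsA : ∑ i, vA i = 1) (hsB : ∑ i, vB i = 1)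
    (hT : TA ≥ TB) (hTB : 0 < TB) :
    ContinuousOn (lottoF vA vB TA TB) (Set.Ioi 0) ∧
    Tendsto (lottoF vA vB TA TB) atTop atTop ∧
    (∃ δ > 0, ∀ γ : ℝ, 0 < γ → γ < δ → lottoF vA vB TA TB γ < 0) ∧
    (∃ γs : ℝ, 0 < γs ∧ lottoF vA vB TA TB γs = 0) := by
  haveI : Nonempty (Fin n) := ⟨⟨0, hn⟩⟩
  have hTA : 0 < TA := lt_of_lt_of_le hTB hT
  -- Continuity (everywhere)
  have hc : Continuous (lottoF vA vB TA TB) := by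
    unfold lottoF
    apply Continuous.sub
    · exact ((continuous_id.mul continuous_const).mul (continuous_finset_sum _ fun i _ =>
        ((((continuous_pow 2).mul continuous_const).div_const _).min continuous_const)))
    · exact continuous_const.mul (continuous_finset_sum _ fun i _ =>
        (continuous_const.mul
          ((((continuous_pow 2).mul continuous_const).div_const _).min continuous_const)))
  -- Tendsto atTop
  have htop : Tendsto (lottoF vA vB TA TB) atTop atTop := by
    have hev : ∀ᶠ γ : ℝ in atTop,
        lottoF vA vB TA TB γ = γ * TA - TB * ∑ i, vA i ^ 2 / vB i := by
      have h1 : ∀ᶠ γ : ℝ in atTop, ∀ i, vA i / vB i ≤ γ := by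
        rw [eventually_all]
        exact fun i => eventually_ge_atTop _
      filter_upwards [h1] with γ hγ
      have hmin : ∀ i, min (γ^2 * (vB i)^2 / vA i) (vA i) = vA i := by
        intro i
        apply min_eq_right
        rw [le_div_iff₀ (hvA i)]
        have h2 : vA i ≤ γ * vB i := (div_le_iff₀ (hvB i)).mp (hγ i)
        nlinarith [hvA i, hvB i]
      unfold lottoF
      simp only [hmin]
      rw [hsA]
      congr 1
      · ring
      · congr 1
        apply Finset.sum_congr rfl
        intro i _
        field_simp
    have hg : Tendsto (fun γ : ℝ => γ * TA - TB * ∑ i, vA i ^ 2 / vB i) atTop atTop :=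
      tendsto_atTop_add_const_right _ _ (tendsto_id.atTop_mul_const hTA)
    exact hg.congr' (hev.mono fun x hx => hx.symm)
  -- negativity for small γ
  set S : ℝ := ∑ i, (vB i)^2 / vA i with hS
  have hSpos : 0 < S := Finset.sum_pos (fun i _ => div_pos (pow_pos (hvB i) 2) (hvA i))
    Finset.univ_nonempty
  set m : ℝ := Finset.univ.inf' Finset.univ_nonempty (fun i => vA i / vB i) with hm
  have hmpos : 0 < m := by
    rw [hm, Finset.lt_inf'_iff]
    exact fun i _ => div_pos (hvA i) (hvB i)
  have hneg : ∀ γ : ℝ, 0 < γ → γ < min m (TB / (TA * S)) → lottoF vA vB TA TB γ < 0 := by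
    intro γ hγ0 hγ
    have hγm : γ < m := lt_of_lt_of_le hγ (min_le_left _ _)
    have hγ2 : γ < TB / (TA * S) := lt_of_lt_of_le hγ (min_le_right _ _)
    have hmin : ∀ i, min (γ^2 * (vB i)^2 / vA i) (vA i) = γ^2 * (vB i)^2 / vA i := by
      intro i
      apply min_eq_left
      rw [div_le_iff₀ (hvA i)]
      have h1 : γ ≤ vA i / vB i := le_of_lt (lt_of_lt_of_le hγm
        (by rw [hm]; exact Finset.inf'_le _ (Finset.mem_univ i)))
      have h2 : γ * vB i ≤ vA i := (le_div_iff₀ (hvB i)).mp h1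
      nlinarith [hvA i, hvB i, mul_le_mul h2 h2 (mul_nonneg hγ0.le (hvB i).le) (hvA i).le]
    have hcalc : lottoF vA vB TA TB γ = γ^2 * (γ * TA * S - TB) := by
      unfold lottoF
      simp only [hmin]
      have e1 : ∑ i, γ^2 * (vB i)^2 / vA i = γ^2 * S := by
        rw [hS, Finset.mul_sum]
        exact Finset.sum_congr rfl fun i _ => by ring
      have e2 : ∑ i, vA i / vB i * (γ^2 * (vB i)^2 / vA i) = γ^2 := by
        have : ∀ i ∈ Finset.univ, vA i / vB i * (γ^2 * (vB i)^2 / vA i) = γ^2 * vB i := by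
          intro i _
          have h1 := (hvA i).ne'
          have h2 := (hvB i).ne'
          field_simp
        rw [Finset.sum_congr rfl this, ← Finset.mul_sum, hsB, mul_one]
      rw [e1, e2]
      ring
    rw [hcalc]
    have : γ * TA * S < TB := by
      have := (lt_div_iff₀ (by positivity : (0:ℝ) < TA * S)).mp hγ2
      nlinarith
    exact mul_neg_of_pos_of_neg (by positivity) (by linarith)
  -- existence of zero
  have hzero : ∃ γs : ℝ, 0 < γs ∧ lottoF vA vB TA TB γs = 0 := by
    set a : ℝ := min m (TB / (TA * S)) / 2 with ha
    have hapos : 0 < a := by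
      have : 0 < min m (TB / (TA * S)) := lt_min hmpos (by positivity)
      positivity
    have hfa : lottoF vA vB TA TB a < 0 := hneg a hapos (by
      rw [ha]; exact half_lt_self (lt_min hmpos (by positivity)))
    obtain ⟨b, hab, hfb⟩ : ∃ b ≥ a, 0 ≤ lottoF vA vB TA TB b := by
      have := (htop.eventually_ge_atTop 0).and (eventually_ge_atTop a)
      obtain ⟨b, hb1, hb2⟩ := this.exists
      exact ⟨b, hb2, hb1⟩
    obtain ⟨c, hc1, hc2⟩ := intermediate_value_Icc hab hc.continuousOn
      (Set.mem_Icc.mpr ⟨le_of_lt hfa, hfb⟩)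
    exact ⟨c, lt_of_lt_of_le hapos hc1.1, hc2⟩
  exact ⟨hc.continuousOn, htop, ⟨min m (TB / (TA * S)), lt_min hmpos (by positivity), hneg⟩, hzero⟩
end

section
/- Let $v_A, v_B \in (0,\infty)^n$ be probability vectors, $T_A \ge T_B > 0$, and let $f$ be as defined. Any $\gamma^* > 0$ with $f(\gamma^*)=0$ satisfies $\frac{T_B}{T_A}\cdot\frac{1}{1+\chi^2(v_B\|v_A)} \le \gamma^* \le \frac{T_B}{T_A}\left(1+\chi^2(v_A\|v_B)\right)$. -/
/-- Chi-squared divergence between probability vectors. -/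
noncomputable def chiSq {n : ℕ} (u v : Fin n → ℝ) : ℝ := (∑ i, (u i)^2 / v i) - 1

/-!
With `ρᵢ = v_{B,i} / v_{A,i}` and `φ(x) = min(γ² x², 1)`, the minimum in the `i`-th summand of `f`
is `v_{A,i} φ(ρᵢ)`. Since `φ` is nondecreasing and `φ(x)/x²` is nonincreasing, Chebyshev's sum
inequality (with weights `v_A`, resp. `v_B`) compares `S = ∑ v_{A,i} φ(ρᵢ)` and
`P = ∑ (v_{A,i}/v_{B,i}) v_{A,i} φ(ρᵢ)` in both directions:
`P ≤ (1 + χ²(v_A‖v_B)) S` and `S ≤ (1 + χ²(v_B‖v_A)) P`.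
A root satisfies `γ T_A S = T_B P`, which turns these into the two bounds on `γ`.
-/

open Finset Set

theorem AntivaryOn.weighted_card_mul_sum_le_sum_mul_sum {ι α : Type*}
    [CommRing α] [LinearOrder α] [IsStrictOrderedRing α] {s : Finset ι} {w f g : ι → α}
    (hw : ∀ i ∈ s, 0 ≤ w i) (hfg : AntivaryOn f g s) :
    (∑ i ∈ s, w i) * ∑ i ∈ s, w i * f i * g i ≤
      (∑ i ∈ s, w i * f i) * ∑ i ∈ s, w i * g i := by
  have hnonpos : ∑ i ∈ s, ∑ j ∈ s, w i * w j * ((f j - f i) * (g j - g i)) ≤ 0 :=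
    sum_nonpos fun i hi => sum_nonpos fun j hj =>
      mul_nonpos_of_nonneg_of_nonpos (mul_nonneg (hw i hi) (hw j hj))
        (hfg.sub_mul_sub_nonpos hi hj)
  have hexpand : ∑ i ∈ s, ∑ j ∈ s, w i * w j * ((f j - f i) * (g j - g i)) =
      (∑ i ∈ s, w i) * (∑ j ∈ s, w j * f j * g j) +
        (∑ i ∈ s, w i * f i * g i) * (∑ j ∈ s, w j) -
        (∑ i ∈ s, w i * g i) * (∑ j ∈ s, w j * f j) -
        (∑ i ∈ s, w i * f i) * (∑ j ∈ s, w j * g j) := by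
    simp only [sum_mul_sum, ← sum_sub_distrib, ← sum_add_distrib]
    exact sum_congr rfl fun i _ => sum_congr rfl fun j _ => by ring
  linarith [mul_comm (∑ i ∈ s, w i * f i * g i) (∑ j ∈ s, w j),
    mul_comm (∑ i ∈ s, w i * g i) (∑ j ∈ s, w j * f j)]

section RatioWeights

variable {ι : Type*} [Fintype ι] {p q : ι → ℝ} {φ : ℝ → ℝ}

theorem sum_div_mul_le_sum_sq_div_mul_sum (hp : ∀ i, 0 < p i) (hq : ∀ i, 0 < q i)
    (hsp : ∑ i, p i = 1) (hφ : MonotoneOn φ (Ioi 0)) :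
    ∑ i, p i / q i * (p i * φ (q i / p i)) ≤
      (∑ i, p i ^ 2 / q i) * ∑ i, p i * φ (q i / p i) := by
  have hanti : AntivaryOn ((·⁻¹) ∘ fun i => q i / p i) (φ ∘ fun i => q i / p i)
      ↑(univ : Finset ι) :=
    (inv_antitoneOn_Ioi.antivaryOn hφ |>.comp_right _).subset
      fun i _ => div_pos (hq i) (hp i)
  have h := hanti.weighted_card_mul_sum_le_sum_mul_sum fun i _ => (hp i).le
  simp only [Function.comp_apply, inv_div, hsp, one_mul] at h
  calc ∑ i, p i / q i * (p i * φ (q i / p i))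
      = ∑ i, p i * (p i / q i) * φ (q i / p i) := sum_congr rfl fun i _ => by ring
    _ ≤ (∑ i, p i * (p i / q i)) * ∑ i, p i * φ (q i / p i) := h
    _ = (∑ i, p i ^ 2 / q i) * ∑ i, p i * φ (q i / p i) := by
      congr 1
      exact sum_congr rfl fun i _ => by ring

theorem sum_mul_le_sum_sq_div_mul_sum_div_mul (hp : ∀ i, 0 < p i) (hq : ∀ i, 0 < q i)
    (hsq : ∑ i, q i = 1) (hφ : AntitoneOn (fun x => φ x / x ^ 2) (Ioi 0)) :
    ∑ i, p i * φ (q i / p i) ≤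
      (∑ i, q i ^ 2 / p i) * ∑ i, p i / q i * (p i * φ (q i / p i)) := by
  have hanti : AntivaryOn ((fun x => φ x / x ^ 2) ∘ fun i => q i / p i)
      (id ∘ fun i => q i / p i) ↑(univ : Finset ι) :=
    (hφ.antivaryOn monotoneOn_id |>.comp_right _).subset fun i _ => div_pos (hq i) (hp i)
  have h := hanti.weighted_card_mul_sum_le_sum_mul_sum fun i _ => (hq i).le
  simp only [Function.comp_apply, id, hsq, one_mul] at h
  have hS : ∑ i, q i * (φ (q i / p i) / (q i / p i) ^ 2) * (q i / p i) =
      ∑ i, p i * φ (q i / p i) :=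
    sum_congr rfl fun i _ => by field_simp [(hp i).ne', (hq i).ne']
  have hP : ∑ i, q i * (φ (q i / p i) / (q i / p i) ^ 2) =
      ∑ i, p i / q i * (p i * φ (q i / p i)) :=
    sum_congr rfl fun i _ => by field_simp [(hp i).ne', (hq i).ne']
  have hQ : ∑ i, q i * (q i / p i) = ∑ i, q i ^ 2 / p i :=
    sum_congr rfl fun i _ => by ring
  rwa [hS, hP, hQ, mul_comm] at h

end RatioWeights

def truncSq (γ x : ℝ) : ℝ := min (γ ^ 2 * x ^ 2) 1

theorem truncSq_pos {γ x : ℝ} (hγ : γ ≠ 0) (hx : x ≠ 0) : 0 < truncSq γ x :=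
  lt_min (by positivity) one_pos

theorem monotoneOn_truncSq (γ : ℝ) : MonotoneOn (truncSq γ) (Ici 0) :=
  fun _ hx _ _ hxy => min_le_min_right _ (by gcongr)

theorem antitoneOn_truncSq_div_sq (γ : ℝ) :
    AntitoneOn (fun x => truncSq γ x / x ^ 2) (Ioi 0) := by
  intro x hx y hy hxy
  have hx2 : (0 : ℝ) < x ^ 2 := pow_pos hx 2
  have hy2 : (0 : ℝ) < y ^ 2 := pow_pos hy 2
  simp only [truncSq, ← min_div_div_right hx2.le, ← min_div_div_right hy2.le,
    mul_div_cancel_right₀ _ hx2.ne', mul_div_cancel_right₀ _ hy2.ne']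
  exact min_le_min_left _ (one_div_le_one_div_of_le hx2 (by gcongr; exact hx.le))

theorem min_sq_mul_sq_div_eq_mul_truncSq (γ b : ℝ) {a : ℝ} (ha : 0 < a) :
    min (γ ^ 2 * b ^ 2 / a) a = a * truncSq γ (b / a) := by
  rw [truncSq, mul_min_of_nonneg _ _ ha.le, mul_one]
  congr 1
  field_simp

theorem lottoF_eq {n : ℕ} {vA : Fin n → ℝ} (vB : Fin n → ℝ) (TA TB γ : ℝ)
    (hvA : ∀ i, 0 < vA i) :
    lottoF vA vB TA TB γ =
      γ * TA * ∑ i, vA i * truncSq γ (vB i / vA i) -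
        TB * ∑ i, vA i / vB i * (vA i * truncSq γ (vB i / vA i)) := by
  simp only [lottoF, min_sq_mul_sq_div_eq_mul_truncSq _ _ (hvA _)]

theorem one_add_chiSq {n : ℕ} (u v : Fin n → ℝ) : 1 + chiSq u v = ∑ i, u i ^ 2 / v i :=
  add_sub_cancel _ _

theorem bounds_of_mul_eq_of_le_mul {TA TB γ S P Q R : ℝ} (hTB : 0 < TB) (hγ : 0 < γ)
    (hS : 0 < S) (hP : 0 < P) (heq : γ * TA * S = TB * P) (hSP : S ≤ Q * P)
    (hPS : P ≤ R * S) :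
    TB / TA * (1 / Q) ≤ γ ∧ γ ≤ TB / TA * R := by
  have hTA : 0 < TA := by
    by_contra! h
    nlinarith [mul_pos hγ hS, mul_pos hTB hP]
  have hQ : 0 < Q := pos_of_mul_pos_left (hS.trans_le hSP) hP.le
  constructor
  · rw [div_mul_div_comm, mul_one, div_le_iff₀ (mul_pos hTA hQ)]
    refine le_of_mul_le_mul_right ?_ hS
    calc TB * S ≤ TB * (Q * P) := by gcongr
      _ = γ * (TA * Q) * S := by linear_combination Q * heq.symm
  · rw [div_mul_eq_mul_div, le_div_iff₀ hTA]
    refine le_of_mul_le_mul_right ?_ hS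
    calc γ * TA * S = TB * P := heq
      _ ≤ TB * (R * S) := by gcongr
      _ = TB * R * S := by ring

theorem stmt_4_general (n : ℕ) (vA vB : Fin n → ℝ) (TA TB : ℝ)
    (hvA : ∀ i, 0 < vA i) (hvB : ∀ i, 0 < vB i)
    (hsA : ∑ i, vA i = 1) (hsB : ∑ i, vB i = 1)
    (hTB : 0 < TB)
    (γs : ℝ) (hγ : 0 < γs) (hroot : lottoF vA vB TA TB γs = 0) :
    TB / TA * (1 / (1 + chiSq vB vA)) ≤ γs ∧
      γs ≤ TB / TA * (1 + chiSq vA vB) := by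
  have hρ : ∀ i, 0 < vB i / vA i := fun i => div_pos (hvB i) (hvA i)
  have hne : (univ : Finset (Fin n)).Nonempty :=
    univ_nonempty_iff.2 ⟨⟨0, Nat.pos_of_ne_zero fun h => by subst h; simp at hsA⟩⟩
  have hPS := sum_div_mul_le_sum_sq_div_mul_sum hvA hvB hsA
    ((monotoneOn_truncSq γs).mono Ioi_subset_Ici_self)
  have hSP := sum_mul_le_sum_sq_div_mul_sum_div_mul hvA hvB hsB (antitoneOn_truncSq_div_sq γs)
  set S := ∑ i, vA i * truncSq γs (vB i / vA i)
  set P := ∑ i, vA i / vB i * (vA i * truncSq γs (vB i / vA i))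
  have hS : 0 < S := sum_pos (fun i _ =>
    mul_pos (hvA i) (truncSq_pos hγ.ne' (hρ i).ne')) hne
  have hP : 0 < P := sum_pos (fun i _ => mul_pos (div_pos (hvA i) (hvB i))
    (mul_pos (hvA i) (truncSq_pos hγ.ne' (hρ i).ne'))) hne
  have heq : γs * TA * S = TB * P := by
    rwa [lottoF_eq vB TA TB γs hvA, sub_eq_zero] at hroot
  rw [one_add_chiSq, one_add_chiSq]
  exact bounds_of_mul_eq_of_le_mul hTB hγ hS hP heq hSP hPS

theorem stmt_4 (n : ℕ) (vA vB : Fin n → ℝ) (TA TB : ℝ)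
    (hvA : ∀ i, 0 < vA i) (hvB : ∀ i, 0 < vB i)
    (hsA : ∑ i, vA i = 1) (hsB : ∑ i, vB i = 1)
    (hT : TA ≥ TB) (hTB : 0 < TB)
    (γs : ℝ) (hγ : 0 < γs) (hroot : lottoF vA vB TA TB γs = 0) :
    TB / TA * (1 / (1 + chiSq vB vA)) ≤ γs ∧
      γs ≤ TB / TA * (1 + chiSq vA vB) :=
  stmt_4_general n vA vB TA TB hvA hvB hsA hsB hTB γs hγ hroot
end

section
/- Let $b_1 \le b_2 \le \cdots \le b_{n-1}$ be positive reals, let $b_n > 0$ and $p_n \in (0,1]$, and suppose $n-1 \ge 4$ and $2\max_k b_k \le \sum_{i=1}^{n-1} b_i + p_n b_n$. Then, setting $b_{12} = b_1 + b_2$, we have $2\max\{\max_{k\ge 3} b_k,\; b_{12}\} \le \sum_{i=3}^{n-1} b_i + b_{12} + p_n b_n$. -/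
theorem stmt_8 (n : ℕ) (hn : 4 ≤ n - 1) (b : ℕ → ℝ)
    (hpos : ∀ k, 1 ≤ k → k ≤ n → 0 < b k)
    (hsorted : ∀ i j, 1 ≤ i → i ≤ j → j ≤ n - 1 → b i ≤ b j)
    (p : ℝ) (hp : p ∈ Set.Ioc (0:ℝ) 1)
    (hmix : ∀ k, 1 ≤ k → k ≤ n →
      2 * b k ≤ (∑ i ∈ Finset.Icc 1 (n - 1), b i) + p * b n) :
    (∀ k, 3 ≤ k → k ≤ n →
      2 * b k ≤ (∑ i ∈ Finset.Icc 3 (n - 1), b i) + (b 1 + b 2) + p * b n) ∧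
    2 * (b 1 + b 2) ≤ (∑ i ∈ Finset.Icc 3 (n - 1), b i) + (b 1 + b 2) + p * b n := by
  have hsplit : (∑ i ∈ Finset.Icc 1 (n - 1), b i)
      = (∑ i ∈ Finset.Icc 3 (n - 1), b i) + (b 1 + b 2) := by
    have hset : Finset.Icc 1 (n - 1) = insert 1 (insert 2 (Finset.Icc 3 (n - 1))) := by
      ext x; simp only [Finset.mem_Icc, Finset.mem_insert]; omega
    rw [hset, Finset.sum_insert (by simp only [Finset.mem_insert, Finset.mem_Icc]; omega),
      Finset.sum_insert (by simp only [Finset.mem_insert, Finset.mem_Icc]; omega)]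
    ring
  constructor
  · intro k hk3 hkn
    have := hmix k (by omega) hkn
    linarith [hsplit]
  · have h34 : b 3 + b 4 ≤ ∑ i ∈ Finset.Icc 3 (n - 1), b i := by
      have hsub : ({3, 4} : Finset ℕ) ⊆ Finset.Icc 3 (n - 1) := by
        intro x hx; simp only [Finset.mem_insert, Finset.mem_singleton] at hx
        simp only [Finset.mem_Icc]; omega
      have := Finset.sum_le_sum_of_subset_of_nonneg hsub
        (fun i hi _ => by
          have hi' := Finset.mem_Icc.mp hi
          exact (hpos i (by omega) (by omega)).le)
      simpa using this
    have h13 : b 1 ≤ b 3 := hsorted 1 3 (by omega) (by omega) (by omega)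
    have h24 : b 2 ≤ b 4 := hsorted 2 4 (by omega) (by omega) (by omega)
    have hbn : 0 < b n := hpos n (by omega) le_rfl
    have hpb : 0 < p * b n := mul_pos hp.1 hbn
    linarith
end

section
/- Let $n$ discrete random variables $X_i \sim \mathrm{Unif}\{0,1,\ldots,\ell_i\}$ (uniform on integers) with $\ell_i \in \mathbb{N}$. If $X_1,\ldots,X_n$ are jointly mixable, then $\sum_{i=1}^n \ell_i$ is even and $2\max_i \ell_i \le \sum_{i=1}^n \ell_i$. -/
open MeasureTheory

/-- The uniform distribution on `{0, 1, ..., ℓ}` as a measure on `ℕ`. -/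
noncomputable def discUnif (ℓ : ℕ) : Measure ℕ :=
  (PMF.uniformOfFinset (Finset.range (ℓ + 1)) ⟨0, by simp⟩).toMeasure

/-!
Almost surely `∑ i, X i = (∑ i, ℓ i) / 2`, and the left side is a natural number, so `∑ i, ℓ i`
is even. Moreover the atom `{X i = ℓ i}` has positive mass, so some outcome has both
`X i = ℓ i` and `∑ j, X j = (∑ j, ℓ j) / 2`, whence `ℓ i ≤ (∑ j, ℓ j) / 2`.
-/

lemma discUnif_singleton_ne_zero {ℓ k : ℕ} (hk : k ≤ ℓ) : discUnif ℓ {k} ≠ 0 := by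
  rw [discUnif, PMF.toMeasure_apply_singleton _ _ (measurableSet_singleton _),
    ← PMF.mem_support_iff]
  exact (PMF.mem_support_uniformOfFinset_iff _ _).mpr (Finset.mem_range_succ_iff.mpr hk)

lemma measure_eval_eq_ne_zero {ι : Type*} {π : Measure (ι → ℕ)} {i : ι} {ℓ k : ℕ}
    (hmarg : π.map (fun x => x i) = discUnif ℓ) (hk : k ≤ ℓ) : π {x | x i = k} ≠ 0 := by
  have h := discUnif_singleton_ne_zero hk
  rwa [← hmarg, Measure.map_apply (measurable_pi_apply i) (measurableSet_singleton k)] at h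

lemma two_mul_sum_eq_of_sum_cast_eq_half {ι : Type*} [Fintype ι] {x ℓ : ι → ℕ}
    (h : (∑ i, (x i : ℝ)) = (∑ i, (ℓ i : ℝ)) / 2) : 2 * ∑ i, x i = ∑ i, ℓ i := by
  exact_mod_cast (by push_cast; linarith : ((2 * ∑ i, x i : ℕ) : ℝ) = ((∑ i, ℓ i : ℕ) : ℝ))

theorem stmt_11 (n : ℕ) (ℓ : Fin n → ℕ)
    (π : Measure (Fin n → ℕ)) [IsProbabilityMeasure π]
    (hmarg : ∀ i, π.map (fun x => x i) = discUnif (ℓ i))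
    (hmix : ∀ᵐ x ∂π, (∑ i, (x i : ℝ)) = (∑ i, (ℓ i : ℝ)) / 2) :
    Even (∑ i, ℓ i) ∧ ∀ i, 2 * ℓ i ≤ ∑ j, ℓ j := by
  have hsum : ∀ᵐ x ∂π, 2 * ∑ i, x i = ∑ i, ℓ i :=
    hmix.mono fun x hx => two_mul_sum_eq_of_sum_cast_eq_half hx
  constructor
  · obtain ⟨x, hx⟩ := hsum.exists
    exact hx ▸ even_two_mul _
  · intro i
    obtain ⟨x, hxi : x i = ℓ i, hx⟩ := Measure.exists_mem_of_measure_ne_zero_of_ae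
      (measure_eval_eq_ne_zero (hmarg i) le_rfl) (ae_restrict_of_ae hsum)
    rw [← hx, ← hxi]
    exact Nat.mul_le_mul_left 2
      (Finset.single_le_sum (fun j _ => Nat.zero_le (x j)) (Finset.mem_univ i))
end

section
/- For any natural numbers $\ell_1, \ell_2 \ge 0$, the discrete uniform random variables $\mathrm{Unif}\{0,\ldots,\ell_1\}$, $\mathrm{Unif}\{0,\ldots,\ell_2\}$, and $\mathrm{Unif}\{0,\ldots,\ell_1+\ell_2\}$ are jointly mixable: there is a coupling $(X_1,X_2,X_3)$ of these three laws with $X_1 + X_2 + X_3 = \ell_1 + \ell_2$ almost surely. -/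
/-!
Put `ℓ₁` red balls, `ℓ₂` blue balls and one black ball in a uniformly random order, and let `X₁`,
`X₂` be the numbers of red and blue balls before the black ball and `X₃` the number of balls after
it, so that `X₁ + X₂ + X₃ = ℓ₁ + ℓ₂`. The black ball is equally likely to occupy each position
relative to the red balls, to the blue balls, and to all balls, so `X₁`, `X₂`, `X₃` are uniform.
Counting rows, this becomes the identity
`∑_{j + j' = n} C(p + j, p) C(q + j', q) = C(p + q + 1 + n, p + q + 1)`, the coefficient of `X ^ n`
in `(1 - X)⁻¹ ^ (p + 1) * (1 - X)⁻¹ ^ (q + 1) = (1 - X)⁻¹ ^ (p + q + 2)`, for `X₁` and `X₂`, and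
Vandermonde's identity for `X₃`.
-/

open MeasureTheory

open Finset
open scoped ENNReal

theorem Nat.sum_antidiagonal_add_choose_mul_add_choose (p q n : ℕ) :
    ∑ ij ∈ antidiagonal n, (p + ij.1).choose p * (q + ij.2).choose q =
      (p + q + 1 + n).choose (p + q + 1) := by
  have h := congrArg (fun u => PowerSeries.coeff n u.val)
    (PowerSeries.invOneSubPow_add ℤ (p + 1) (q + 1))
  rw [show p + 1 + (q + 1) = p + q + 1 + 1 by ring] at h
  simp only [Units.val_mul, PowerSeries.invOneSubPow_val_succ_eq_mk_add_choose,
    PowerSeries.coeff_mul, PowerSeries.coeff_mk] at h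
  exact_mod_cast h.symm

theorem Nat.sum_antidiagonal_ite_add_choose_mul_choose {a b n t : ℕ} (ht : t ≤ a + b + n) :
    ∑ jj ∈ antidiagonal n,
        (if b + jj.2 = t then (a + jj.1).choose a * (b + jj.2).choose b else 0) =
      (a + b + n - t).choose a * t.choose b := by
  rw [Nat.sum_antidiagonal_eq_sum_range_succ_mk]
  by_cases hbt : b ≤ t ∧ t ≤ b + n
  · rw [sum_eq_single (b + n - t)]
    · rw [if_pos (by omega), show a + (b + n - t) = a + b + n - t by omega,
        show b + (n - (b + n - t)) = t by omega]
    · intro j hj hne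
      simp only [mem_range] at hj
      rw [if_neg (by omega)]
    · intro hj
      simp only [mem_range] at hj
      omega
  · rw [sum_eq_zero fun j _ => if_neg (by omega)]
    rcases not_and_or.1 hbt with h | h
    · rw [Nat.choose_eq_zero_of_lt (not_le.1 h), mul_zero]
    · rw [Nat.choose_eq_zero_of_lt (by omega : a + b + n - t < a), zero_mul]

theorem MeasureTheory.Measure.map_smul_sum_dirac {ι α β : Type*} [MeasurableSpace α]
    [MeasurableSpace β] {g : α → β} (hg : Measurable g) (c : ℝ≥0∞) (s : Finset ι)
    (w : ι → ℝ≥0∞) (x : ι → α) :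
    (c • ∑ i ∈ s, w i • Measure.dirac (x i)).map g =
      c • ∑ i ∈ s, w i • Measure.dirac (g (x i)) := by
  rw [Measure.map_smul, Measure.map_finset_sum hg.aemeasurable]
  simp only [Measure.map_smul, Measure.map_dirac' hg]

theorem MeasureTheory.ae_smul_sum_dirac {ι α : Type*} [MeasurableSpace α]
    [MeasurableSingletonClass α] {p : α → Prop} (c : ℝ≥0∞) (s : Finset ι) (w : ι → ℝ≥0∞) (x : ι → α)
    (h : ∀ i ∈ s, p (x i)) : ∀ᵐ y ∂(c • ∑ i ∈ s, w i • Measure.dirac (x i)), p y := by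
  refine Measure.ae_smul_measure ?_ c
  rw [← Measure.sum_coe_finset, Measure.ae_sum_iff]
  rintro ⟨i, hi⟩
  exact Measure.ae_smul_measure (by simpa [ae_dirac_eq] using h i hi) _

theorem discUnif_eq_smul_sum_dirac (ℓ : ℕ) :
    discUnif ℓ = ((ℓ + 1 : ℕ) : ℝ≥0∞)⁻¹ • ∑ k ∈ range (ℓ + 1), Measure.dirac k := by
  refine Measure.ext_of_singleton fun x => ?_
  rw [discUnif, PMF.toMeasure_apply_singleton _ _ (measurableSet_singleton x)]
  refine (PMF.uniformOfFinset_apply _ x).trans ?_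
  simp [Set.indicator]

theorem smul_sum_dirac_eq_discUnif {ι : Type*} (s : Finset ι) (n : ι → ℕ) (x : ι → ℕ)
    {ℓ M N : ℕ} (hM : M ≠ 0) (hN : M * (ℓ + 1) = N) (hx : ∀ i ∈ s, x i ≤ ℓ)
    (hfiber : ∀ k ≤ ℓ, ∑ i ∈ s with x i = k, n i = M) :
    (N : ℝ≥0∞)⁻¹ • ∑ i ∈ s, (n i : ℝ≥0∞) • Measure.dirac (x i) = discUnif ℓ := by
  have hgroup : ∑ i ∈ s, (n i : ℝ≥0∞) • Measure.dirac (x i) =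
      (M : ℝ≥0∞) • ∑ k ∈ range (ℓ + 1), Measure.dirac k := by
    rw [← sum_fiberwise_of_maps_to (g := x) (t := range (ℓ + 1))
      fun i hi => mem_range_succ_iff.2 (hx i hi), smul_sum]
    refine sum_congr rfl fun k hk => ?_
    rw [← hfiber k (mem_range_succ_iff.1 hk), Nat.cast_sum, sum_smul]
    exact sum_congr rfl fun i hi => by rw [(mem_filter.1 hi).2]
  rw [hgroup, smul_smul, discUnif_eq_smul_sum_dirac, ← hN, Nat.cast_mul,
    ENNReal.mul_inv (by simp) (by simp), mul_right_comm,
    ENNReal.inv_mul_cancel (by exact_mod_cast hM) (by simp), one_mul]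

/-- `c = ((r, r'), (b, b'))` records a row of `ℓ₁` red balls, `ℓ₂` blue balls and one black ball
with `r` red and `b` blue balls before the black ball and `r'` red and `b'` blue ones after it;
`urnWeight c` counts such rows. There are `(ℓ₁ + ℓ₂ + 1) * (ℓ₁ + ℓ₂).choose ℓ₁` rows in all, so
`urnCoupling` is the law of `(r, b, r' + b')` for a uniformly random row. -/
def urnWeight (c : (ℕ × ℕ) × (ℕ × ℕ)) : ℕ :=
  (c.1.1 + c.2.1).choose c.1.1 * (c.1.2 + c.2.2).choose c.1.2

noncomputable def urnCoupling (ℓ₁ ℓ₂ : ℕ) : Measure (ℕ × ℕ × ℕ) :=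
  (((ℓ₁ + ℓ₂ + 1) * (ℓ₁ + ℓ₂).choose ℓ₁ : ℕ) : ℝ≥0∞)⁻¹ •
    ∑ c ∈ antidiagonal ℓ₁ ×ˢ antidiagonal ℓ₂,
      (urnWeight c : ℝ≥0∞) • Measure.dirac (c.1.1, c.2.1, c.1.2 + c.2.2)

theorem sum_urnWeight_filter_red_before {ℓ₁ k : ℕ} (ℓ₂ : ℕ) (hk : k ≤ ℓ₁) :
    ∑ c ∈ antidiagonal ℓ₁ ×ˢ antidiagonal ℓ₂ with c.1.1 = k, urnWeight c =
      (ℓ₁ + ℓ₂ + 1).choose (ℓ₁ + 1) := by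
  rw [filter_product_left (fun x : ℕ × ℕ => x.1 = k),
    HasAntidiagonal.filter_fst_eq_antidiagonal ℓ₁ k, if_pos hk, sum_product, sum_singleton]
  simp only [urnWeight]
  rw [Nat.sum_antidiagonal_add_choose_mul_add_choose, show k + (ℓ₁ - k) = ℓ₁ by omega,
    add_right_comm]

theorem sum_urnWeight_filter_blue_before {ℓ₂ k : ℕ} (ℓ₁ : ℕ) (hk : k ≤ ℓ₂) :
    ∑ c ∈ antidiagonal ℓ₁ ×ˢ antidiagonal ℓ₂ with c.2.1 = k, urnWeight c =
      (ℓ₁ + ℓ₂ + 1).choose (ℓ₂ + 1) := by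
  rw [filter_product_right (fun x : ℕ × ℕ => x.1 = k),
    HasAntidiagonal.filter_fst_eq_antidiagonal ℓ₂ k, if_pos hk, sum_product]
  have hsymm : ∀ x ∈ antidiagonal ℓ₁, ∑ y ∈ {(k, ℓ₂ - k)}, urnWeight (x, y) =
      (k + x.1).choose k * (ℓ₂ - k + x.2).choose (ℓ₂ - k) := fun x _ => by
    rw [sum_singleton, urnWeight, Nat.choose_symm_add, Nat.choose_symm_add, add_comm x.1,
      add_comm x.2]
  rw [sum_congr rfl hsymm, Nat.sum_antidiagonal_add_choose_mul_add_choose,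
    show k + (ℓ₂ - k) = ℓ₂ by omega, add_right_comm, add_comm ℓ₂]

theorem sum_urnWeight_filter_after {ℓ₁ ℓ₂ t : ℕ} (ht : t ≤ ℓ₁ + ℓ₂) :
    ∑ c ∈ antidiagonal ℓ₁ ×ˢ antidiagonal ℓ₂ with c.1.2 + c.2.2 = t, urnWeight c =
      (ℓ₁ + ℓ₂).choose ℓ₁ := by
  rw [sum_filter, sum_product]
  have hinner : ∀ ii ∈ antidiagonal ℓ₁, ∑ jj ∈ antidiagonal ℓ₂,
      (if ii.2 + jj.2 = t then urnWeight (ii, jj) else 0) =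
        (ℓ₁ + ℓ₂ - t).choose ii.1 * t.choose ii.2 := by
    intro ii hii
    have hsum := HasAntidiagonal.mem_antidiagonal.1 hii
    rw [← hsum]
    exact Nat.sum_antidiagonal_ite_add_choose_mul_choose (a := ii.1) (by omega)
  rw [sum_congr rfl hinner, ← Nat.add_choose_eq, Nat.sub_add_cancel ht]

namespace urnCoupling

variable (ℓ₁ ℓ₂ : ℕ)

theorem map_fst : (urnCoupling ℓ₁ ℓ₂).map (fun x => x.1) = discUnif ℓ₁ := by
  rw [urnCoupling, Measure.map_smul_sum_dirac measurable_fst]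
  refine smul_sum_dirac_eq_discUnif _ _ _ (Nat.choose_pos (by omega)).ne'
    (Nat.add_one_mul_choose_eq _ _).symm (fun c hc => ?_)
    fun k hk => sum_urnWeight_filter_red_before ℓ₂ hk
  simp only [mem_product, HasAntidiagonal.mem_antidiagonal] at hc ⊢
  omega

theorem map_snd_fst : (urnCoupling ℓ₁ ℓ₂).map (fun x => x.2.1) = discUnif ℓ₂ := by
  rw [urnCoupling, Measure.map_smul_sum_dirac measurable_snd.fst]
  refine smul_sum_dirac_eq_discUnif _ _ _ (Nat.choose_pos (by omega)).ne' ?_ (fun c hc => ?_)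
    fun k hk => sum_urnWeight_filter_blue_before ℓ₁ hk
  · rw [← Nat.add_one_mul_choose_eq, ← Nat.choose_symm_add]
  · simp only [mem_product, HasAntidiagonal.mem_antidiagonal] at hc ⊢
    omega

theorem map_snd_snd : (urnCoupling ℓ₁ ℓ₂).map (fun x => x.2.2) = discUnif (ℓ₁ + ℓ₂) := by
  rw [urnCoupling, Measure.map_smul_sum_dirac measurable_snd.snd]
  refine smul_sum_dirac_eq_discUnif _ _ _ (Nat.choose_pos (by omega)).ne' (mul_comm _ _)
    (fun c hc => ?_) fun t ht => sum_urnWeight_filter_after ht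
  simp only [mem_product, HasAntidiagonal.mem_antidiagonal] at hc ⊢
  omega

theorem ae_add_eq : ∀ᵐ x ∂(urnCoupling ℓ₁ ℓ₂), x.1 + x.2.1 + x.2.2 = ℓ₁ + ℓ₂ := by
  refine ae_smul_sum_dirac _ _ _ _ fun c hc => ?_
  simp only [mem_product, HasAntidiagonal.mem_antidiagonal] at hc ⊢
  omega

end urnCoupling

theorem stmt_12 (ℓ₁ ℓ₂ : ℕ) :
    ∃ π : Measure (ℕ × ℕ × ℕ), IsProbabilityMeasure π ∧
      π.map (fun x => x.1) = discUnif ℓ₁ ∧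
      π.map (fun x => x.2.1) = discUnif ℓ₂ ∧
      π.map (fun x => x.2.2) = discUnif (ℓ₁ + ℓ₂) ∧
      (∀ᵐ x ∂π, x.1 + x.2.1 + x.2.2 = ℓ₁ + ℓ₂) := by
  have hfst := urnCoupling.map_fst ℓ₁ ℓ₂
  have : IsProbabilityMeasure ((urnCoupling ℓ₁ ℓ₂).map fun x => x.1) := by
    rw [hfst, discUnif]
    infer_instance
  exact ⟨urnCoupling ℓ₁ ℓ₂, Measure.isProbabilityMeasure_of_map (fun x => x.1), hfst,
    urnCoupling.map_snd_fst ℓ₁ ℓ₂, urnCoupling.map_snd_snd ℓ₁ ℓ₂, urnCoupling.ae_add_eq ℓ₁ ℓ₂⟩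
end

section
/- Let $\ell_1,\ell_2,\ell_3$ be natural numbers with $\ell_1 \le \ell_2 \le \ell_3$, such that $\ell_1+\ell_2+\ell_3$ is even and $\ell_3 \le \ell_1 + \ell_2$. Then the discrete uniform random variables $\mathrm{Unif}\{0,\ldots,\ell_1\}$, $\mathrm{Unif}\{0,\ldots,\ell_2\}$, $\mathrm{Unif}\{0,\ldots,\ell_3\}$ are jointly mixable, i.e., admit a coupling with sum almost surely equal to $(\ell_1+\ell_2+\ell_3)/2$. -/
/-!
Write `(ℓ₁, ℓ₂, ℓ₃) = (q + r, p + r, p + q)` with `p, q, r ∈ ℕ` (this is exactly the parity and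
triangle condition) and `s = p + q + r`. By strong induction on `p + q + r` we build a finite
measure with natural weights on the plane `x + y + z = s` whose marginals are multiples of the
counting measures of `[0, ℓ₁]`, `[0, ℓ₂]`, `[0, ℓ₃]`; normalising it gives the coupling.

Up to symmetry either `q = r = 0` (the antidiagonal `(0, k, p - k)`), or `p < q, r`, or
`0 < q = r ≤ p`. In the last two cases the measure is glued from the two faces `x = 0` and
`x = ℓ₁` of the hexagon (segments on which `y` and `z` are antitone), the mixing of the slab
`0 < x < ℓ₁` given by the smaller triple `(p + 1, q - 1, r - 1)`, and two smaller mixings of the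
same slab which cover the `y`- and `z`-values that the faces hit too rarely. Weights making all
three marginals uniform exist and are explicit polynomials in `p, q, r`.
-/

open MeasureTheory

open Finset Measure
open scoped ENNReal

namespace DiscreteUniformMixing

noncomputable def intervalCount (t n : ℕ) : Measure ℕ := ∑ k ∈ range n, dirac (t + k)

@[simp] lemma intervalCount_zero (t : ℕ) : intervalCount t 0 = 0 := by simp [intervalCount]

lemma intervalCount_one (t : ℕ) : intervalCount t 1 = dirac t := by simp [intervalCount]

lemma intervalCount_add_intervalCount {t m u : ℕ} (h : t + m = u) (n : ℕ) :
    intervalCount t m + intervalCount u n = intervalCount t (m + n) := by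
  simp only [intervalCount, sum_range_add, ← h, add_assoc]

lemma intervalCount_apply_univ (t n : ℕ) : intervalCount t n Set.univ = n := by
  simp [intervalCount]

lemma map_intervalCount {α : Type*} [MeasurableSpace α] (f : ℕ → α) (t n : ℕ) :
    (intervalCount t n).map f = ∑ k ∈ range n, dirac (f (t + k)) := by
  simp [intervalCount, Measure.map_finset_sum Measurable.of_discrete.aemeasurable,
    map_dirac' Measurable.of_discrete]

lemma map_add_left_intervalCount (u t n : ℕ) :
    (intervalCount t n).map (u + ·) = intervalCount (u + t) n := by
  rw [map_intervalCount]
  simp [intervalCount, add_assoc]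

lemma map_intervalCount_reflect (v n : ℕ) :
    (intervalCount 0 n).map (fun k => v + (n - 1 - k)) = intervalCount v n := by
  rw [map_intervalCount]
  simp only [zero_add]
  exact sum_range_reflect (fun k => dirac (v + k)) n

lemma ae_lt_intervalCount (t n : ℕ) : ∀ᵐ k ∂intervalCount t n, t ≤ k ∧ k < t + n := by
  rw [ae_iff]
  simp [intervalCount, Measure.dirac_apply' _ MeasurableSet.of_discrete]

lemma discUnif_eq (ℓ : ℕ) :
    discUnif ℓ = ((ℓ + 1 : ℕ) : ℝ≥0∞)⁻¹ • intervalCount 0 (ℓ + 1) := by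
  change (PMF.uniformOfFinset _ nonempty_range_add_one).toMeasure = _
  refine ext_of_singleton fun k => ?_
  simp [PMF.toMeasure_apply_singleton _ _ MeasurableSet.of_discrete, PMF.uniformOfFinset_apply,
    intervalCount, Measure.dirac_apply' _ MeasurableSet.of_discrete]

lemma natCast_mul_smul_discUnif (ℓ k : ℕ) :
    (((ℓ + 1) * k : ℕ) : ℝ≥0∞) • discUnif ℓ = (k : ℝ≥0∞) • intervalCount 0 (ℓ + 1) := by
  rw [discUnif_eq, smul_smul, Nat.cast_mul, mul_right_comm,
    ENNReal.mul_inv_cancel (by positivity) (ENNReal.natCast_ne_top _), one_mul]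

structure IsMixing (π : Measure (ℕ × ℕ × ℕ)) (μ₁ μ₂ μ₃ : Measure ℕ) (s : ℕ) : Prop where
  map_fst : π.map (fun x => x.1) = μ₁
  map_snd : π.map (fun x => x.2.1) = μ₂
  map_thd : π.map (fun x => x.2.2) = μ₃
  ae_sum_eq : ∀ᵐ x ∂π, x.1 + x.2.1 + x.2.2 = s

namespace IsMixing

variable {π ρ : Measure (ℕ × ℕ × ℕ)} {μ₁ μ₂ μ₃ ν₁ ν₂ ν₃ : Measure ℕ} {s : ℕ}

lemma add (hπ : IsMixing π μ₁ μ₂ μ₃ s) (hρ : IsMixing ρ ν₁ ν₂ ν₃ s) :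
    IsMixing (π + ρ) (μ₁ + ν₁) (μ₂ + ν₂) (μ₃ + ν₃) s where
  map_fst := by rw [Measure.map_add _ _ .of_discrete, hπ.map_fst, hρ.map_fst]
  map_snd := by rw [Measure.map_add _ _ .of_discrete, hπ.map_snd, hρ.map_snd]
  map_thd := by rw [Measure.map_add _ _ .of_discrete, hπ.map_thd, hρ.map_thd]
  ae_sum_eq := ae_add_measure_iff.2 ⟨hπ.ae_sum_eq, hρ.ae_sum_eq⟩

lemma smul (hπ : IsMixing π μ₁ μ₂ μ₃ s) (c : ℝ≥0∞) :
    IsMixing (c • π) (c • μ₁) (c • μ₂) (c • μ₃) s where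
  map_fst := by rw [Measure.map_smul, hπ.map_fst]
  map_snd := by rw [Measure.map_smul, hπ.map_snd]
  map_thd := by rw [Measure.map_smul, hπ.map_thd]
  ae_sum_eq := ae_smul_measure hπ.ae_sum_eq c

lemma inv_smul {c : ℝ≥0∞} (hπ : IsMixing π (c • μ₁) (c • μ₂) (c • μ₃) s) (h₀ : c ≠ 0)
    (h_top : c ≠ ∞) : IsMixing (c⁻¹ • π) μ₁ μ₂ μ₃ s := by
  simpa [smul_smul, ENNReal.inv_mul_cancel h₀ h_top] using hπ.smul c⁻¹

lemma map_add_left (hπ : IsMixing π μ₁ μ₂ μ₃ s) (t₁ t₂ t₃ : ℕ) :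
    IsMixing (π.map fun x => (t₁ + x.1, t₂ + x.2.1, t₃ + x.2.2))
      (μ₁.map (t₁ + ·)) (μ₂.map (t₂ + ·)) (μ₃.map (t₃ + ·)) (t₁ + t₂ + t₃ + s) where
  map_fst := by
    rw [← hπ.map_fst, map_map .of_discrete .of_discrete, map_map .of_discrete .of_discrete]; rfl
  map_snd := by
    rw [← hπ.map_snd, map_map .of_discrete .of_discrete, map_map .of_discrete .of_discrete]; rfl
  map_thd := by
    rw [← hπ.map_thd, map_map .of_discrete .of_discrete, map_map .of_discrete .of_discrete]; rfl
  ae_sum_eq := (ae_map_iff Measurable.of_discrete.aemeasurable .of_discrete).2 <|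
    hπ.ae_sum_eq.mono fun x hx => by simp only; omega

lemma swap₁₂ (hπ : IsMixing π μ₁ μ₂ μ₃ s) :
    IsMixing (π.map fun x => (x.2.1, x.1, x.2.2)) μ₂ μ₁ μ₃ s where
  map_fst := by rw [map_map .of_discrete .of_discrete]; exact hπ.map_snd
  map_snd := by rw [map_map .of_discrete .of_discrete]; exact hπ.map_fst
  map_thd := by rw [map_map .of_discrete .of_discrete]; exact hπ.map_thd
  ae_sum_eq := (ae_map_iff Measurable.of_discrete.aemeasurable .of_discrete).2 <|
    hπ.ae_sum_eq.mono fun x hx => by simp only; omega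

lemma swap₂₃ (hπ : IsMixing π μ₁ μ₂ μ₃ s) :
    IsMixing (π.map fun x => (x.1, x.2.2, x.2.1)) μ₁ μ₃ μ₂ s where
  map_fst := by rw [map_map .of_discrete .of_discrete]; exact hπ.map_fst
  map_snd := by rw [map_map .of_discrete .of_discrete]; exact hπ.map_thd
  map_thd := by rw [map_map .of_discrete .of_discrete]; exact hπ.map_snd
  ae_sum_eq := (ae_map_iff Measurable.of_discrete.aemeasurable .of_discrete).2 <|
    hπ.ae_sum_eq.mono fun x hx => by simp only; omega

end IsMixing

noncomputable def face (t u v n : ℕ) : Measure (ℕ × ℕ × ℕ) :=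
  (intervalCount 0 n).map fun k => (t, u + k, v + (n - 1 - k))

lemma isMixing_face (t u v n s : ℕ) (hs : t + u + v + n = s + 1) :
    IsMixing (face t u v n) ((n : ℝ≥0∞) • intervalCount t 1) (intervalCount u n)
      (intervalCount v n) s where
  map_fst := by
    rw [face, map_map .of_discrete .of_discrete, Function.comp_def, Measure.map_const,
      intervalCount_apply_univ, intervalCount_one]
  map_snd := by
    rw [face, map_map .of_discrete .of_discrete, Function.comp_def, map_add_left_intervalCount,
      add_zero]
  map_thd := by
    rw [face, map_map .of_discrete .of_discrete, Function.comp_def, map_intervalCount_reflect]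
  ae_sum_eq := (ae_map_iff Measurable.of_discrete.aemeasurable .of_discrete).2 <|
    (ae_lt_intervalCount 0 n).mono fun k hk => by simp only; omega

/-- The `nᵢ` are numbers of points, not maxima. The multiplicities give every marginal the total
mass `n₁ n₂ n₃`; if some `nᵢ = 0`, the zero measure qualifies. -/
def Mixable (n₁ n₂ n₃ s : ℕ) : Prop :=
  ∃ π, IsMixing π (((n₂ * n₃ : ℕ) : ℝ≥0∞) • intervalCount 0 n₁)
    (((n₁ * n₃ : ℕ) : ℝ≥0∞) • intervalCount 0 n₂) (((n₁ * n₂ : ℕ) : ℝ≥0∞) • intervalCount 0 n₃) s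

lemma IsMixing.mixable {π : Measure (ℕ × ℕ × ℕ)} {μ₁ μ₂ μ₃ : Measure ℕ} {n₁ n₂ n₃ s : ℕ}
    (h : IsMixing π μ₁ μ₂ μ₃ s) (n : ℕ) (hn : n ≠ 0)
    (h₁ : μ₁ = ((n * (n₂ * n₃) : ℕ) : ℝ≥0∞) • intervalCount 0 n₁)
    (h₂ : μ₂ = ((n * (n₁ * n₃) : ℕ) : ℝ≥0∞) • intervalCount 0 n₂)
    (h₃ : μ₃ = ((n * (n₁ * n₂) : ℕ) : ℝ≥0∞) • intervalCount 0 n₃) :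
    Mixable n₁ n₂ n₃ s := by
  simp only [h₁, h₂, h₃, Nat.cast_mul n, ← smul_smul] at h
  exact ⟨_, h.inv_smul (by exact_mod_cast hn) (ENNReal.natCast_ne_top n)⟩

namespace Mixable

variable {n₁ n₂ n₃ s : ℕ}

lemma of_mul_eq_zero (h : n₁ * n₂ * n₃ = 0) : Mixable n₁ n₂ n₃ s := by
  refine ⟨0, ?_, ?_, ?_, by simp⟩ <;>
  rcases mul_eq_zero.1 h with h | rfl <;> try rcases mul_eq_zero.1 h with rfl | rfl
  all_goals simp

lemma exists_isMixing_add_left (h : Mixable n₁ n₂ n₃ s) (t₁ t₂ t₃ : ℕ) {s' : ℕ}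
    (hs : t₁ + t₂ + t₃ + s = s') :
    ∃ π, IsMixing π (((n₂ * n₃ : ℕ) : ℝ≥0∞) • intervalCount t₁ n₁)
      (((n₁ * n₃ : ℕ) : ℝ≥0∞) • intervalCount t₂ n₂)
      (((n₁ * n₂ : ℕ) : ℝ≥0∞) • intervalCount t₃ n₃) s' := by
  obtain ⟨π, hπ⟩ := h
  exact ⟨_, by simpa only [Measure.map_smul, map_add_left_intervalCount, add_zero, hs] using
    hπ.map_add_left t₁ t₂ t₃⟩

lemma swap₁₂ (h : Mixable n₁ n₂ n₃ s) : Mixable n₂ n₁ n₃ s := by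
  obtain ⟨π, hπ⟩ := h
  exact ⟨_, by simpa only [mul_comm n₁ n₂] using hπ.swap₁₂⟩

lemma swap₂₃ (h : Mixable n₁ n₂ n₃ s) : Mixable n₁ n₃ n₂ s := by
  obtain ⟨π, hπ⟩ := h
  exact ⟨_, by simpa only [mul_comm n₂ n₃] using hπ.swap₂₃⟩

lemma exists_isMixing_discUnif {ℓ₁ ℓ₂ ℓ₃ : ℕ} (h : Mixable (ℓ₁ + 1) (ℓ₂ + 1) (ℓ₃ + 1) s) :
    ∃ π, IsProbabilityMeasure π ∧ IsMixing π (discUnif ℓ₁) (discUnif ℓ₂) (discUnif ℓ₃) s := by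
  obtain ⟨π, hπ⟩ := h
  have h₂ : (ℓ₂ + 1) * ((ℓ₁ + 1) * (ℓ₃ + 1)) = (ℓ₁ + 1) * ((ℓ₂ + 1) * (ℓ₃ + 1)) := by ring
  have h₃ : (ℓ₃ + 1) * ((ℓ₁ + 1) * (ℓ₂ + 1)) = (ℓ₁ + 1) * ((ℓ₂ + 1) * (ℓ₃ + 1)) := by ring
  simp only [← natCast_mul_smul_discUnif, h₂, h₃] at hπ
  have hmix := hπ.inv_smul (by positivity) (ENNReal.natCast_ne_top _)
  refine ⟨_, ⟨?_⟩, hmix⟩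
  rw [← Set.preimage_univ (f := fun x : ℕ × ℕ × ℕ => x.1), ← map_apply .of_discrete .univ,
    hmix.map_fst]
  simp [discUnif]

end Mixable

abbrev TriMixable (p q r : ℕ) : Prop := Mixable (q + r + 1) (p + r + 1) (p + q + 1) (p + q + r)

lemma TriMixable.swap₁₂ {p q r : ℕ} (h : TriMixable p q r) : TriMixable q p r := by
  simpa only [TriMixable, add_comm p q] using Mixable.swap₁₂ h

lemma TriMixable.swap₂₃ {p q r : ℕ} (h : TriMixable p q r) : TriMixable p r q := by
  simpa only [TriMixable, add_comm q r, add_right_comm p q r] using Mixable.swap₂₃ h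

lemma triMixable_zero_zero (p : ℕ) : TriMixable p 0 0 := by
  refine ⟨((p + 1 : ℕ) : ℝ≥0∞) • face 0 0 0 (p + 1), ?_⟩
  simpa [smul_smul, intervalCount_one] using
    (isMixing_face 0 0 0 (p + 1) p (by ring)).smul ((p + 1 : ℕ) : ℝ≥0∞)

/-- The step for `(p, q, r) = (p, p + 1 + e, p + 1 + f)`: the faces miss the `y`-values in
`[p + 1, p + f]` and the `z`-values in `[p + 1, p + e]`, which `hy` and `hz` fill. -/
lemma mixable_of_slab_of_lt (p e f : ℕ)
    (h₀ : Mixable (2*p+1+e+f) (2*p+2+f) (2*p+2+e) (3*p+1+e+f))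
    (hy : Mixable (2*p+1+e+f) f (2*p+2+e) (2*p+e+f))
    (hz : Mixable (2*p+1+e+f) (2*p+2+f) e (2*p+e+f)) :
    Mixable (2*p+3+e+f) (2*p+2+f) (2*p+2+e) (3*p+2+e+f) := by
  obtain ⟨π₀, h₀⟩ := h₀.exists_isMixing_add_left 1 0 0 (s' := 3*p+2+e+f) (by ring)
  obtain ⟨πy, hy⟩ := hy.exists_isMixing_add_left 1 (p+1) 0 (s' := 3*p+2+e+f) (by ring)
  obtain ⟨πz, hz⟩ := hz.exists_isMixing_add_left 1 0 (p+1) (s' := 3*p+2+e+f) (by ring)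
  have hF₀ := isMixing_face 0 (p+1+f) (p+1+e) (p+1) (3*p+2+e+f) (by ring)
  have hF₁ := isMixing_face (2*p+2+e+f) 0 0 (p+1) (3*p+2+e+f) (by ring)
  have hπ := (((hF₀.add hF₁).smul (((2*p+1+e+f) * (2*p+2+f) * (2*p+2+e) : ℕ) : ℝ≥0∞)).add
    (h₀.smul ((p * (2*p+3+e+f) + 1 : ℕ) : ℝ≥0∞))).add (hy.smul ((2*p+2+f : ℕ) : ℝ≥0∞)) |>.add
    (hz.smul ((2*p+2+e : ℕ) : ℝ≥0∞))
  refine hπ.mixable ((2*p+1+e+f) * (p+1)) (by positivity) ?_ ?_ ?_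
  · rw [show 2*p+3+e+f = 1 + (2*p+1+e+f) + 1 by ring,
      ← intervalCount_add_intervalCount (show 0 + (1 + (2*p+1+e+f)) = 2*p+2+e+f by ring),
      ← intervalCount_add_intervalCount (zero_add 1)]
    push_cast
    module
  · rw [show 2*p+2+f = (p+1) + f + (p+1) by ring,
      ← intervalCount_add_intervalCount (show 0 + ((p+1) + f) = p+1+f by ring),
      ← intervalCount_add_intervalCount (zero_add (p+1))]
    push_cast
    module
  · rw [show 2*p+2+e = (p+1) + e + (p+1) by ring,
      ← intervalCount_add_intervalCount (show 0 + ((p+1) + e) = p+1+e by ring),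
      ← intervalCount_add_intervalCount (zero_add (p+1))]
    push_cast
    module

/-- The step for `(p, q, r) = (p + 1, t + 1, t + 1)`: the two copies of `h₁` cover
`y ∈ [0, t], z ∈ [p + 2, p + t + 2]` and the mirror image, so that together with the faces every
`y`- and `z`-value is hit twice. -/
lemma mixable_of_slab_of_eq (p t : ℕ)
    (h₀ : Mixable (2*t+1) (p+t+3) (p+t+3) (p+2*t+2)) (h₁ : Mixable (2*t+1) (t+1) (t+1) (2*t)) :
    Mixable (2*t+3) (p+t+3) (p+t+3) (p+2*t+3) := by
  obtain ⟨π₀, h₀⟩ := h₀.exists_isMixing_add_left 1 0 0 (s' := p+2*t+3) (by ring)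
  obtain ⟨π₁, h₁'⟩ := h₁.exists_isMixing_add_left 1 0 (p+2) (s' := p+2*t+3) (by ring)
  obtain ⟨π₂, h₂⟩ := h₁.exists_isMixing_add_left 1 (p+2) 0 (s' := p+2*t+3) (by ring)
  have hF₀ := isMixing_face 0 (t+1) (t+1) (p+2) (p+2*t+3) (by ring)
  have hF₁ := isMixing_face (2*t+2) 0 0 (p+2) (p+2*t+3) (by ring)
  have hπ := (((hF₀.add hF₁).smul (((2*t+1) * (t+1) * (p+t+3)^2 : ℕ) : ℝ≥0∞)).add
    (h₀.smul (((t+1) * ((2*t+1)*p + 2*t) : ℕ) : ℝ≥0∞))).add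
    (h₁'.smul (((p+t+3)^2 : ℕ) : ℝ≥0∞)) |>.add (h₂.smul (((p+t+3)^2 : ℕ) : ℝ≥0∞))
  have split₁ : intervalCount 0 (t+1) + intervalCount (t+1) (p+2) = intervalCount 0 (p+t+3) := by
    rw [intervalCount_add_intervalCount (zero_add _)]; ring_nf
  have split₂ : intervalCount 0 (p+2) + intervalCount (p+2) (t+1) = intervalCount 0 (p+t+3) := by
    rw [intervalCount_add_intervalCount (zero_add _)]; ring_nf
  refine hπ.mixable ((2*t+1) * (t+1) * (p+2)) (by positivity) ?_ ?_ ?_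
  · rw [show 2*t+3 = 1 + (2*t+1) + 1 by ring,
      ← intervalCount_add_intervalCount (show 0 + (1 + (2*t+1)) = 2*t+2 by ring),
      ← intervalCount_add_intervalCount (zero_add 1)]
    push_cast
    module
  all_goals
    calc _ = (((2*t+1) * (t+1) * (p+t+3)^2 : ℕ) : ℝ≥0∞) •
          ((intervalCount 0 (t+1) + intervalCount (t+1) (p+2)) +
            (intervalCount 0 (p+2) + intervalCount (p+2) (t+1))) +
          (((t+1) * ((2*t+1)*p + 2*t) * ((2*t+1) * (p+t+3)) : ℕ) : ℝ≥0∞) •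
            intervalCount 0 (p+t+3) := by
          push_cast; module
      _ = _ := by rw [split₁, split₂]; push_cast; module

lemma forall_of_forall_le_le {P : ℕ → ℕ → ℕ → Prop} (h₁₂ : ∀ {p q r}, P p q r → P q p r)
    (h₂₃ : ∀ {p q r}, P p q r → P p r q) (h : ∀ {p q r}, p ≤ q → q ≤ r → P p q r) (p q r : ℕ) :
    P p q r := by
  rcases le_total p q with hpq | hqp <;> rcases le_total q r with hqr | hrq
  · exact h hpq hqr
  · rcases le_total p r with hpr | hrp
    · exact h₂₃ (h hpr hrq)
    · exact h₂₃ (h₁₂ (h hrp hpq))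
  · rcases le_total p r with hpr | hrp
    · exact h₁₂ (h hqp hpr)
    · exact h₁₂ (h₂₃ (h hqr hrp))
  · exact h₁₂ (h₂₃ (h₁₂ (h hrq hqp)))

theorem triMixable (p q r : ℕ) : TriMixable p q r := by
  induction hn : p + q + r using Nat.strong_induction_on generalizing p q r with
  | _ n ih =>
    have ih' : ∀ {p q r}, p + q + r < n → TriMixable p q r := fun h => ih _ h _ _ _ rfl
    refine forall_of_forall_le_le (P := fun p q r => p + q + r = n → TriMixable p q r)
      (fun h hs => (h (by omega)).swap₁₂) (fun h hs => (h (by omega)).swap₂₃) ?_ p q r hn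
    rintro p q r hpq hqr rfl
    obtain hpq | rfl := hpq.lt_or_eq
    · obtain ⟨e, rfl⟩ := Nat.exists_eq_add_of_lt hpq
      obtain ⟨f, rfl⟩ := Nat.exists_eq_add_of_lt (hpq.trans_le hqr)
      have h₀ : TriMixable (p+1) (p+e) (p+f) := ih' (by omega)
      have hy : Mixable (2*p+1+e+f) f (2*p+2+e) (2*p+e+f) := by
        rcases f with _ | f
        · exact .of_mul_eq_zero (by simp)
        · have : TriMixable 0 (2*p+1+e) f := ih' (by omega)
          convert this using 1 <;> ring
      have hz : Mixable (2*p+1+e+f) (2*p+2+f) e (2*p+e+f) := by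
        rcases e with _ | e
        · exact .of_mul_eq_zero (by simp)
        · have : TriMixable 0 e (2*p+1+f) := ih' (by omega)
          convert this using 1 <;> ring
      convert mixable_of_slab_of_lt p e f (by convert h₀ using 1 <;> ring) hy hz using 1 <;> ring
    · rcases p with _ | t
      · exact (triMixable_zero_zero r).swap₁₂.swap₂₃
      · obtain ⟨p, rfl⟩ : ∃ p, r = p + 1 := ⟨r - 1, by omega⟩
        have h₀ : TriMixable (p+2) t t := ih' (by omega)
        have h₁ : TriMixable 0 t t := ih' (by omega)
        refine TriMixable.swap₂₃ (TriMixable.swap₁₂ ?_)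
        convert mixable_of_slab_of_eq p t (by convert h₀ using 1 <;> ring)
          (by convert h₁ using 1 <;> ring) using 1 <;> ring

lemma mixable_of_le_add {ℓ₁ ℓ₂ ℓ₃ s : ℕ} (hs : ℓ₁ + ℓ₂ + ℓ₃ = 2 * s) (h₁ : ℓ₁ ≤ ℓ₂ + ℓ₃)
    (h₂ : ℓ₂ ≤ ℓ₁ + ℓ₃) (h₃ : ℓ₃ ≤ ℓ₁ + ℓ₂) : Mixable (ℓ₁ + 1) (ℓ₂ + 1) (ℓ₃ + 1) s := by
  convert triMixable (s - ℓ₁) (s - ℓ₂) (s - ℓ₃) using 1 <;> omega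

end DiscreteUniformMixing

theorem stmt_14 (ℓ₁ ℓ₂ ℓ₃ : ℕ) (hle : ℓ₁ ≤ ℓ₂) (hle' : ℓ₂ ≤ ℓ₃)
    (heven : Even (ℓ₁ + ℓ₂ + ℓ₃)) (hmax : ℓ₃ ≤ ℓ₁ + ℓ₂) :
    ∃ π : Measure (ℕ × ℕ × ℕ), IsProbabilityMeasure π ∧
      π.map (fun x => x.1) = discUnif ℓ₁ ∧
      π.map (fun x => x.2.1) = discUnif ℓ₂ ∧
      π.map (fun x => x.2.2) = discUnif ℓ₃ ∧
      (∀ᵐ x ∂π, x.1 + x.2.1 + x.2.2 = (ℓ₁ + ℓ₂ + ℓ₃) / 2) := by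
  obtain ⟨k, hk⟩ := heven
  obtain ⟨π, hprob, hπ⟩ :=
    (DiscreteUniformMixing.mixable_of_le_add (s := (ℓ₁ + ℓ₂ + ℓ₃) / 2) (by omega) (by omega)
      (by omega) hmax).exists_isMixing_discUnif
  exact ⟨π, hprob, hπ.map_fst, hπ.map_snd, hπ.map_thd, hπ.ae_sum_eq⟩
end
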